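/- Decoupling inequality: for any stochastic matrix P with stationary law π and any observable f : Ω → ℝ, E_{ZRP(P,r,m)}(f,f) ≥ λ(P) · E_{ZRP(Π,r,m)}(f,f), where λ(P) = min over non-constant φ of E_P(φ,φ)/Var_π(φ) and Π(x,y) = π(y). Moreover equality holds for some non-constant f. -/
import Mathlib
set_option linter.unusedSectionVars false
set_option linter.unusedVariables false


open Finset

variable (V : Type*) [Fintype V] [DecidableEq V]

/-- Product-form (unnormalized) stationary weight of a configuration. -/
noncomputable def weight (π : V → ℝ) (r : V → ℕ → ℝ) (η : V → ℕ) : ℝ :=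
  ∏ x, ∏ k ∈ Finset.Icc 1 (η x), π x / r x k

/-- Add one particle at site `x` : the configuration `η + δ_x`. -/
def addOne (η : V → ℕ) (x : V) : V → ℕ := Function.update η x (η x + 1)

/-- Move a particle from `x` to `y`: the configuration `η + δ_y - δ_x`. -/
def move (η : V → ℕ) (x y : V) : V → ℕ :=
  addOne V (Function.update η x (η x - 1)) y

/-- The set of configurations of `m` particles on `V`. -/
def configs (m : ℕ) : Finset (V → ℕ) :=
  (Fintype.piFinset fun _ : V => Finset.range (m + 1)).filter fun η => ∑ x, η x = m

/-- Single-particle Dirichlet form `⟨φ, (I - P) ψ⟩_π`. -/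
noncomputable def EP (π : V → ℝ) (P : V → V → ℝ) (φ ψ : V → ℝ) : ℝ :=
  ∑ x, ∑ y, π x * P x y * (φ x * (ψ x - ψ y))

/-- Zero-range Dirichlet form with jump matrix `P`, rates `r` and measure `μ`
on configurations with `m` particles. -/
noncomputable def EZRP (P : V → V → ℝ) (r : V → ℕ → ℝ) (μ : (V → ℕ) → ℝ) (m : ℕ)
    (f g : (V → ℕ) → ℝ) : ℝ :=
  ∑ η ∈ configs V m, ∑ x, ∑ y,
    μ η * r x (η x) * P x y * (f η * (g η - g (move V η x y)))

/-- Mean of an observable on `m`-particle configurations under `μ`. -/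
noncomputable def meanOn (m : ℕ) (μ : (V → ℕ) → ℝ) (f : (V → ℕ) → ℝ) : ℝ :=
  ∑ η ∈ configs V m, μ η * f η

/-- Variance of an observable on `m`-particle configurations under `μ`. -/
noncomputable def varOn (m : ℕ) (μ : (V → ℕ) → ℝ) (f : (V → ℕ) → ℝ) : ℝ :=
  meanOn V m μ (fun η => (f η) ^ 2) - (meanOn V m μ f) ^ 2

/-- Variance of `φ : V → ℝ` under the probability vector `π`. -/
noncomputable def varPi (π : V → ℝ) (φ : V → ℝ) : ℝ :=
  ∑ x, π x * (φ x) ^ 2 - (∑ x, π x * φ x) ^ 2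



lemma mem_configs_iff {m : ℕ} {η : V → ℕ} : η ∈ configs V m ↔ ∑ x, η x = m := by
  constructor
  · intro h; exact (Finset.mem_filter.mp h).2
  · intro h
    refine Finset.mem_filter.mpr ⟨Fintype.mem_piFinset.mpr fun x => ?_, h⟩
    rw [Finset.mem_range, Nat.lt_succ_iff, ← h]
    exact Finset.single_le_sum (fun y _ => Nat.zero_le _) (Finset.mem_univ x)

lemma prod_comp_update {M : Type*} [CommMonoid M] (g : V → ℕ → M) (ξ : V → ℕ) (x : V) (v : ℕ) :
    ∏ z, g z (Function.update ξ x v z) = g x v * ∏ z ∈ Finset.univ \ {x}, g z (ξ z) := by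
  have h : (fun z => g z (Function.update ξ x v z))
      = Function.update (fun z => g z (ξ z)) x (g x v) := by
    funext z
    rcases eq_or_ne z x with rfl | hz
    · simp
    · simp [Function.update_of_ne hz]
  calc ∏ z, g z (Function.update ξ x v z)
      = ∏ z, Function.update (fun z => g z (ξ z)) x (g x v) z := by rw [h]
    _ = _ := Finset.prod_update_of_mem (Finset.mem_univ x) _ _

lemma sum_comp_update {M : Type*} [AddCommMonoid M] (g : V → ℕ → M) (ξ : V → ℕ) (x : V) (v : ℕ) :
    ∑ z, g z (Function.update ξ x v z) = g x v + ∑ z ∈ Finset.univ \ {x}, g z (ξ z) := by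
  have h : (fun z => g z (Function.update ξ x v z))
      = Function.update (fun z => g z (ξ z)) x (g x v) := by
    funext z
    rcases eq_or_ne z x with rfl | hz
    · simp
    · simp [Function.update_of_ne hz]
  calc ∑ z, g z (Function.update ξ x v z)
      = ∑ z, Function.update (fun z => g z (ξ z)) x (g x v) z := by rw [h]
    _ = _ := Finset.sum_update_of_mem (Finset.mem_univ x) _ _

lemma prod_split_at {M : Type*} [CommMonoid M] (g : V → ℕ → M) (ξ : V → ℕ) (x : V) :
    ∏ z, g z (ξ z) = g x (ξ x) * ∏ z ∈ Finset.univ \ {x}, g z (ξ z) := by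
  have := prod_comp_update V g ξ x (ξ x)
  simpa [Function.update_eq_self] using this

lemma sum_split_at {M : Type*} [AddCommMonoid M] (g : V → ℕ → M) (ξ : V → ℕ) (x : V) :
    ∑ z, g z (ξ z) = g x (ξ x) + ∑ z ∈ Finset.univ \ {x}, g z (ξ z) := by
  have := sum_comp_update V g ξ x (ξ x)
  simpa [Function.update_eq_self] using this

lemma sum_addOne (ξ : V → ℕ) (x : V) : ∑ y, addOne V ξ x y = (∑ y, ξ y) + 1 := by
  unfold addOne
  rw [sum_comp_update V (fun _ n => n) ξ x (ξ x + 1), sum_split_at V (fun _ n => n) ξ x]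
  omega

lemma weight_addOne (π : V → ℝ) (r : V → ℕ → ℝ) (ξ : V → ℕ) (x : V) :
    weight V π r (addOne V ξ x) = weight V π r ξ * (π x / r x (ξ x + 1)) := by
  unfold weight addOne
  rw [prod_comp_update V (fun z n => ∏ k ∈ Finset.Icc 1 n, π z / r z k) ξ x (ξ x + 1),
    Finset.prod_Icc_succ_top (Nat.succ_le_succ (Nat.zero_le _)),
    prod_split_at V (fun z n => ∏ k ∈ Finset.Icc 1 n, π z / r z k) ξ x]
  ring

lemma move_addOne (ξ : V → ℕ) (x y : V) : move V (addOne V ξ x) x y = addOne V ξ y := by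
  unfold move addOne
  simp [Function.update_idem, Function.update_eq_self]

lemma addOne_apply_self (ξ : V → ℕ) (x : V) : addOne V ξ x x = ξ x + 1 := by
  simp [addOne]

lemma weight_nonneg (π : V → ℝ) (hπ : ∀ x, 0 < π x) (r : V → ℕ → ℝ)
    (hr : ∀ x k, 1 ≤ k → 0 < r x k) (η : V → ℕ) : 0 ≤ weight V π r η :=
  Finset.prod_nonneg fun x _ => Finset.prod_nonneg fun k hk =>
    le_of_lt (div_pos (hπ x) (hr x k (Finset.mem_Icc.mp hk).1))

lemma sum_configs_succ (n : ℕ) (F : (V → ℕ) → V → ℝ)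
    (hF : ∀ η x, η x = 0 → F η x = 0) :
    ∑ η ∈ configs V (n + 1), ∑ x, F η x = ∑ ξ ∈ configs V n, ∑ x, F (addOne V ξ x) x := by
  rw [← Finset.sum_product (configs V (n+1)) Finset.univ (fun p => F p.1 p.2),
      ← Finset.sum_product (configs V n) Finset.univ (fun p => F (addOne V p.1 p.2) p.2)]
  rw [← Finset.sum_filter_of_ne (p := fun p : (V → ℕ) × V => p.1 p.2 ≠ 0)
      (fun p _ hne => fun h0 => hne (hF p.1 p.2 h0))]
  symm
  refine Finset.sum_bij' (fun p _ => (addOne V p.1 p.2, p.2))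
    (fun p _ => (Function.update p.1 p.2 (p.1 p.2 - 1), p.2)) ?_ ?_ ?_ ?_ ?_
  · rintro ⟨ξ, x⟩ hp
    rw [Finset.mem_product] at hp
    refine Finset.mem_filter.mpr ⟨Finset.mem_product.mpr ⟨?_, Finset.mem_univ _⟩, ?_⟩
    · exact (mem_configs_iff V).mpr (by rw [sum_addOne, (mem_configs_iff V).mp hp.1])
    · show addOne V ξ x x ≠ 0
      rw [addOne_apply_self]
      omega
  · rintro ⟨η, x⟩ hp
    dsimp only
    rw [Finset.mem_filter, Finset.mem_product] at hp
    dsimp only at hp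
    obtain ⟨⟨hη, -⟩, hx⟩ := hp
    refine Finset.mem_product.mpr ⟨(mem_configs_iff V).mpr ?_, Finset.mem_univ _⟩
    have hsum := (mem_configs_iff V).mp hη
    rw [sum_comp_update V (fun _ k => k) η x (η x - 1)]
    rw [sum_split_at V (fun _ k => k) η x] at hsum
    omega
  · rintro ⟨ξ, x⟩ hp
    simp only [Prod.mk.injEq]
    refine ⟨?_, trivial⟩
    funext z
    rcases eq_or_ne z x with rfl | hz
    · simp [addOne]
    · simp [addOne, Function.update_of_ne hz]
  · rintro ⟨η, x⟩ hp
    rw [Finset.mem_filter] at hp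
    have hx : η x ≠ 0 := hp.2
    simp only [Prod.mk.injEq]
    refine ⟨?_, trivial⟩
    funext z
    rcases eq_or_ne z x with rfl | hz
    · simp only [addOne, Function.update_self]
      omega
    · simp [addOne, Function.update_of_ne hz]
  · rintro ⟨ξ, x⟩ hp
    rfl

lemma EZRP_reduce (π : V → ℝ)
    (Q : V → V → ℝ) (r : V → ℕ → ℝ) (hr : ∀ x k, 1 ≤ k → 0 < r x k) (hr0 : ∀ x, r x 0 = 0)
    (μ : (V → ℕ) → ℝ) (Z : ℝ) (hμ : ∀ η, μ η = weight V π r η / Z)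
    (n : ℕ) (f : (V → ℕ) → ℝ) :
    EZRP V Q r μ (n + 1) f f
      = ∑ ξ ∈ configs V n, (weight V π r ξ / Z) *
          EP V π Q (fun x => f (addOne V ξ x)) (fun x => f (addOne V ξ x)) := by
  unfold EZRP
  rw [sum_configs_succ V n
      (fun η x => ∑ y, μ η * r x (η x) * Q x y * (f η * (f η - f (move V η x y))))
      (fun η x h => by simp [h, hr0])]
  refine Finset.sum_congr rfl fun ξ hξ => ?_
  unfold EP
  rw [Finset.mul_sum]
  refine Finset.sum_congr rfl fun x _ => ?_
  rw [Finset.mul_sum]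
  refine Finset.sum_congr rfl fun y _ => ?_
  rw [move_addOne, hμ, weight_addOne, addOne_apply_self]
  have hrne : r x (ξ x + 1) ≠ 0 := ne_of_gt (hr x _ (Nat.succ_le_succ (Nat.zero_le _)))
  have key : weight V π r ξ * (π x / r x (ξ x + 1)) / Z * r x (ξ x + 1)
      = weight V π r ξ / Z * π x := by
    rw [div_mul_eq_mul_div, mul_assoc, div_mul_cancel₀ _ hrne, div_mul_eq_mul_div]
  linear_combination
    (Q x y * (f (addOne V ξ x) * (f (addOne V ξ x) - f (addOne V ξ y)))) * key

lemma EP_pi (π : V → ℝ) (hπ1 : ∑ x, π x = 1) (φ : V → ℝ) :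
    EP V π (fun _ y => π y) φ φ = varPi V π φ := by
  unfold EP varPi
  have e : ∀ x y : V, π x * π y * (φ x * (φ x - φ y))
      = (π x * (φ x)^2) * π y - (π x * φ x) * (π y * φ y) := fun x y => by ring
  simp_rw [e, Finset.sum_sub_distrib, ← Finset.mul_sum, hπ1, mul_one, ← Finset.sum_mul, sq]

lemma EP_shift (π : V → ℝ) (Q : V → V → ℝ) (hQrow : ∀ x, ∑ y, Q x y = 1)
    (hQstat : ∀ y, ∑ x, π x * Q x y = π y) (φ : V → ℝ) (c : ℝ) :
    EP V π Q (fun x => c + φ x) (fun x => c + φ x) = EP V π Q φ φ := by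
  unfold EP
  have h2 : ∑ x, ∑ y, π x * Q x y * φ x = ∑ x, π x * φ x := by
    refine Finset.sum_congr rfl fun x _ => ?_
    calc ∑ y, π x * Q x y * φ x = (π x * φ x) * ∑ y, Q x y := by
          rw [Finset.mul_sum]; exact Finset.sum_congr rfl fun y _ => by ring
      _ = π x * φ x := by rw [hQrow x, mul_one]
  have h3 : ∑ x, ∑ y, π x * Q x y * φ y = ∑ x, π x * φ x := by
    rw [Finset.sum_comm]
    refine Finset.sum_congr rfl fun y _ => ?_
    calc ∑ x, π x * Q x y * φ y = (∑ x, π x * Q x y) * φ y := by rw [Finset.sum_mul]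
      _ = π y * φ y := by rw [hQstat y]
  have key : ∑ x, ∑ y, (π x * Q x y * φ x - π x * Q x y * φ y) = 0 := by
    simp_rw [Finset.sum_sub_distrib]
    rw [h2, h3, sub_self]
  have expand : ∀ x y, π x * Q x y * ((c + φ x) * ((c + φ x) - (c + φ y)))
      = π x * Q x y * (φ x * (φ x - φ y))
        + c * (π x * Q x y * φ x - π x * Q x y * φ y) := fun x y => by ring
  simp_rw [expand, Finset.sum_add_distrib, ← Finset.mul_sum]
  rw [key, mul_zero, add_zero]

lemma varPi_shift (π : V → ℝ) (hπ1 : ∑ x, π x = 1) (φ : V → ℝ) (c : ℝ) :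
    varPi V π (fun x => c + φ x) = varPi V π φ := by
  unfold varPi
  have e1 : ∀ x, π x * (c + φ x)^2
      = c^2 * π x + 2*c*(π x * φ x) + π x * (φ x)^2 := fun x => by ring
  have e2 : ∀ x, π x * (c + φ x) = c * π x + π x * φ x := fun x => by ring
  simp_rw [e1, e2, Finset.sum_add_distrib, ← Finset.mul_sum, hπ1]
  ring

lemma varPi_ne_exists (π : V → ℝ) (hπ1 : ∑ x, π x = 1) (φ : V → ℝ)
    (h : varPi V π φ ≠ 0) : ∃ x y : V, φ x ≠ φ y := by
  by_contra hc
  push_neg at hc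
  apply h
  have hne : Nonempty V := by
    by_contra hempty
    rw [not_nonempty_iff] at hempty
    apply h
    simp [varPi, Finset.univ_eq_empty]
  obtain ⟨x₀⟩ := hne
  have hφ : ∀ x, φ x = φ x₀ := fun x => hc x x₀
  unfold varPi
  simp_rw [hφ]
  rw [← Finset.sum_mul, ← Finset.sum_mul, hπ1]
  ring
lemma f_addOne (φ : V → ℝ) (ξ : V → ℕ) (x : V) :
    ∑ z, (addOne V ξ x z : ℝ) * φ z = (∑ z, (ξ z : ℝ) * φ z) + φ x := by
  unfold addOne
  rw [sum_comp_update V (fun z n => (n : ℝ) * φ z) ξ x (ξ x + 1),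
    sum_split_at V (fun z n => (n : ℝ) * φ z) ξ x]
  push_cast
  ring

/-- decoupling inequality E_ZRP(P) ≥ λ(P)·E_ZRP(Π), with equality attained. -/
theorem zrp_meanfield_decoupling
    (m : ℕ) (hm : 1 ≤ m)
    (π : V → ℝ) (hπ : ∀ x, 0 < π x) (hπ1 : ∑ x, π x = 1)
    (P : V → V → ℝ) (hP0 : ∀ x y, 0 ≤ P x y) (hProw : ∀ x, ∑ y, P x y = 1)
    (hstat : ∀ y, ∑ x, π x * P x y = π y)
    (r : V → ℕ → ℝ) (hr : ∀ x k, 1 ≤ k → 0 < r x k) (hr0 : ∀ x, r x 0 = 0)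
    (μ : (V → ℕ) → ℝ)
    (hμ : ∀ η, μ η = weight V π r η / ∑ ξ ∈ configs V m, weight V π r ξ)
    (lamP : ℝ)
    (hlam1 : ∀ φ : V → ℝ, lamP * varPi V π φ ≤ EP V π P φ φ)
    (hlam2 : ∃ φ : V → ℝ, varPi V π φ ≠ 0 ∧ EP V π P φ φ = lamP * varPi V π φ) :
    (∀ f : (V → ℕ) → ℝ,
        lamP * EZRP V (fun _ y => π y) r μ m f f ≤ EZRP V P r μ m f f)
    ∧ ∃ f : (V → ℕ) → ℝ,
        (∃ η ∈ configs V m, ∃ η' ∈ configs V m, f η ≠ f η') ∧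
        EZRP V P r μ m f f = lamP * EZRP V (fun _ y => π y) r μ m f f := by
  obtain ⟨n, rfl⟩ : ∃ n, m = n + 1 := ⟨m - 1, by omega⟩
  set Z : ℝ := ∑ ξ ∈ configs V (n + 1), weight V π r ξ with hZ
  have hZ0 : 0 ≤ Z := Finset.sum_nonneg fun ξ _ => weight_nonneg V π hπ r hr ξ
  have hc0 : ∀ ξ : V → ℕ, 0 ≤ weight V π r ξ / Z := fun ξ =>
    div_nonneg (weight_nonneg V π hπ r hr ξ) hZ0
  have hred : ∀ (Q : V → V → ℝ) (f : (V → ℕ) → ℝ),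
      EZRP V Q r μ (n + 1) f f
        = ∑ ξ ∈ configs V n, (weight V π r ξ / Z) *
            EP V π Q (fun x => f (addOne V ξ x)) (fun x => f (addOne V ξ x)) :=
    fun Q f => EZRP_reduce V π Q r hr hr0 μ Z hμ n f
  constructor
  · intro f
    rw [hred P f, hred (fun _ y => π y) f, Finset.mul_sum]
    refine Finset.sum_le_sum fun ξ _ => ?_
    rw [EP_pi V π hπ1]
    calc lamP * (weight V π r ξ / Z * varPi V π (fun x => f (addOne V ξ x)))
        = (weight V π r ξ / Z) * (lamP * varPi V π (fun x => f (addOne V ξ x))) := by ring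
      _ ≤ (weight V π r ξ / Z) * EP V π P (fun x => f (addOne V ξ x)) (fun x => f (addOne V ξ x)) :=
          mul_le_mul_of_nonneg_left (hlam1 _) (hc0 ξ)
  · obtain ⟨φ, hvar, heq⟩ := hlam2
    obtain ⟨x₀, y₀, hxy⟩ := varPi_ne_exists V π hπ1 φ hvar
    refine ⟨fun η => ∑ z, (η z : ℝ) * φ z, ?_, ?_⟩
    · refine ⟨(fun z => if z = x₀ then n + 1 else 0), ?_,
        (fun z => if z = y₀ then n + 1 else 0), ?_, ?_⟩
      · exact (mem_configs_iff V).mpr (by simp)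
      · exact (mem_configs_iff V).mpr (by simp)
      · have e1 : ∑ z, ((if z = x₀ then ((n:ℕ) + 1) else 0 : ℕ) : ℝ) * φ z
            = ((n : ℝ) + 1) * φ x₀ := by
          rw [Finset.sum_eq_single x₀]
          · simp
          · intro b _ hb; simp [hb]
          · intro h; exact absurd (Finset.mem_univ x₀) h
        have e2 : ∑ z, ((if z = y₀ then ((n:ℕ) + 1) else 0 : ℕ) : ℝ) * φ z
            = ((n : ℝ) + 1) * φ y₀ := by
          rw [Finset.sum_eq_single y₀]
          · simp
          · intro b _ hb; simp [hb]
          · intro h; exact absurd (Finset.mem_univ y₀) h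
        dsimp only
        rw [e1, e2]
        intro h
        have hn : ((n : ℝ) + 1) ≠ 0 := by positivity
        exact hxy (mul_left_cancel₀ hn h)
    · rw [hred P _, hred (fun _ y => π y) _, Finset.mul_sum]
      refine Finset.sum_congr rfl fun ξ _ => ?_
      have hφξ : (fun x => ∑ z, (addOne V ξ x z : ℝ) * φ z)
          = fun x => (∑ z, (ξ z : ℝ) * φ z) + φ x := funext fun x => f_addOne V φ ξ x
      rw [hφξ, EP_pi V π hπ1,
        EP_shift V π P hProw hstat φ (∑ z, (ξ z : ℝ) * φ z),
        varPi_shift V π hπ1 φ (∑ z, (ξ z : ℝ) * φ z), heq]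
      ring
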